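/- Let Q ∈ F_q[x] be monic irreducible and 𝔇 = deg Q − 1, and let X(Q) = {χ ≠ χ₀ mod Q : L(1/2,χ) ≠ 0}. Then |X(Q)| ≥ c · q^𝔇/𝔇 for a constant c > 0 depending only on q; equivalently, the proportion of nontrivial characters χ modulo Q with L(1/2,χ) ≠ 0 is ≫ 1/𝔇. -/

import Mathlib

/-!
Write `L ψ` for `L(1/2, ψ ∘ mk)`, `ψ` running over the `q^(𝔇+1) - 1` multiplicative characters of
the field `F[X]/(Q)`. The monic `N` of degree `≤ 𝔇` have distinct nonzero residues mod `Q`, so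
orthogonality gives the first moment `∑ L ψ = #ψ` (only `N = 1` survives) and the second moment
`∑ |L ψ|² = #ψ · ∑ q^(-deg N) ≤ #ψ (𝔇 + 1)`. The trivial character contributes at most
`∑_{k ≤ 𝔇} q^(k/2)`, which is less than `#ψ`, and at most half of it once `𝔇 ≥ 6`. Cauchy–Schwarz
over the nontrivial `ψ` with `L ψ ≠ 0` then bounds their number below by `#ψ / (4 (𝔇 + 1))`, and
by `1` when `𝔇 ≤ 5`; the constant `q^(-5)` covers both cases.
-/

open Polynomial

noncomputable section

variable {F : Type*}

/-- A Dirichlet character modulo `Q` over the polynomial ring. -/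
def IsDirichletChar [CommRing F] (Q : Polynomial F) (χ : Polynomial F → ℂ) : Prop :=
  (∀ A B : Polynomial F, χ (A + B * Q) = χ A) ∧
  (∀ A B : Polynomial F, χ (A * B) = χ A * χ B) ∧
  (∀ A : Polynomial F, χ A ≠ 0 ↔ IsCoprime A Q)

/-- The trivial character modulo `Q`. -/
def trivialChar [CommRing F] (Q : Polynomial F) : Polynomial F → ℂ :=
  fun A => @ite ℂ (IsCoprime A Q) (Classical.propDecidable _) 1 0

/-- Euler's totient: the number of residue classes modulo `Q` coprime to `Q`. -/
def polyPhi [Field F] (Q : Polynomial F) : ℕ :=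
  Nat.card ((Polynomial F ⧸ Ideal.span {Q}))ˣ

/-- The central value `L(1/2,χ)` as a finite sum over monic polynomials of degree `≤ 𝔇`. -/
def Lhalf [Field F] (q 𝔇 : ℕ) (χ : Polynomial F → ℂ) : ℂ :=
  ∑ᶠ N ∈ {N : Polynomial F | N.Monic ∧ N.natDegree ≤ 𝔇},
    χ N / (Real.sqrt ((q : ℝ) ^ N.natDegree) : ℂ)

open Finset ComplexConjugate

namespace MulChar

variable {M : Type*} [CommMonoid M] [Finite M]

theorem norm_apply_of_isUnit (ψ : MulChar M ℂ) {a : M} (ha : IsUnit a) : ‖ψ a‖ = 1 := by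
  cases nonempty_fintype Mˣ
  obtain ⟨u, rfl⟩ := ha
  refine Complex.norm_eq_one_of_pow_eq_one (n := Fintype.card Mˣ) ?_ Fintype.card_ne_zero
  rw [← map_pow, ← Units.val_pow_eq_pow_val, pow_card_eq_one, Units.val_one, map_one]

theorem apply_mul_conj_apply_of_isUnit (ψ : MulChar M ℂ) (a : M) {b : M} (hb : IsUnit b) :
    ψ a * conj (ψ b) = ψ (a * ↑hb.unit⁻¹) := by
  have hb1 : ψ b * conj (ψ b) = 1 := by
    rw [Complex.mul_conj, ← Complex.sq_norm, norm_apply_of_isUnit ψ hb]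
    norm_num
  calc ψ a * conj (ψ b) = ψ (a * ↑hb.unit⁻¹ * b) * conj (ψ b) := by
        rw [mul_assoc, IsUnit.val_inv_mul, mul_one]
    _ = ψ (a * ↑hb.unit⁻¹) := by rw [map_mul, mul_assoc, hb1, mul_one]

variable [Fintype (MulChar M ℂ)]

theorem sum_apply_eq_ite [DecidableEq M] (a : M) :
    ∑ ψ : MulChar M ℂ, ψ a = if a = 1 then (Fintype.card (MulChar M ℂ) : ℂ) else 0 := by
  split_ifs with ha
  · simp [ha]
  · obtain ⟨χ, hχ⟩ := exists_apply_ne_one_of_hasEnoughRootsOfUnity M ℂ ha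
    refine eq_zero_of_mul_eq_self_left hχ ?_
    simp only [Finset.mul_sum, ← mul_apply]
    exact Fintype.sum_bijective _ (Group.mulLeft_bijective χ) _ _ fun _ ↦ rfl

theorem sum_sum_mul_apply [DecidableEq M] {ι : Type*} (S : Finset ι) (w : ι → ℂ) (f : ι → M) :
    ∑ ψ : MulChar M ℂ, ∑ i ∈ S, w i * ψ (f i) =
      Fintype.card (MulChar M ℂ) * ∑ i ∈ S with f i = 1, w i := by
  rw [Finset.sum_comm, Finset.sum_filter, Finset.mul_sum]
  refine Finset.sum_congr rfl fun i _ ↦ ?_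
  rw [← Finset.mul_sum, sum_apply_eq_ite]
  split_ifs <;> simp [mul_comm]

theorem sum_norm_sq_sum_mul_apply {ι : Type*} (S : Finset ι) (w : ι → ℂ) {f : ι → M}
    (hf : Set.InjOn f S) (hunit : ∀ i ∈ S, IsUnit (f i)) :
    ∑ ψ : MulChar M ℂ, ‖∑ i ∈ S, w i * ψ (f i)‖ ^ 2 =
      Fintype.card (MulChar M ℂ) * ∑ i ∈ S, ‖w i‖ ^ 2 := by
  classical
  have horth : ∀ i ∈ S, ∀ j ∈ S, ∑ ψ : MulChar M ℂ, ψ (f i) * conj (ψ (f j)) =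
      if i = j then (Fintype.card (MulChar M ℂ) : ℂ) else 0 := by
    intro i hi j hj
    simp_rw [apply_mul_conj_apply_of_isUnit _ _ (hunit j hj), sum_apply_eq_ite,
      Units.mul_inv_eq_one, IsUnit.unit_spec, hf.eq_iff hi hj]
  apply Complex.ofReal_injective
  push_cast
  simp_rw [← Complex.mul_conj']
  calc ∑ ψ : MulChar M ℂ, (∑ i ∈ S, w i * ψ (f i)) * conj (∑ i ∈ S, w i * ψ (f i))
      = ∑ i ∈ S, ∑ j ∈ S, w i * conj (w j) * ∑ ψ : MulChar M ℂ, ψ (f i) * conj (ψ (f j)) := by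
        simp_rw [map_sum, map_mul, Finset.sum_mul_sum, Finset.mul_sum]
        rw [Finset.sum_comm]
        refine Finset.sum_congr rfl fun i _ ↦ ?_
        rw [Finset.sum_comm]
        refine Finset.sum_congr rfl fun j _ ↦ Finset.sum_congr rfl fun ψ _ ↦ ?_
        ring
    _ = Fintype.card (MulChar M ℂ) * ∑ i ∈ S, w i * conj (w i) := by
        rw [Finset.mul_sum]
        refine Finset.sum_congr rfl fun i hi ↦ ?_
        rw [Finset.sum_congr rfl fun j hj ↦ by rw [horth i hi j hj]]
        simp [hi, mul_comm]
end MulChar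

theorem norm_sum_sub_norm_sq_le_ncard_mul {ι E : Type*} [Fintype ι] [SeminormedAddCommGroup E]
    (f : ι → E) (i₀ : ι) (h : ‖f i₀‖ ≤ ‖∑ i, f i‖) :
    (‖∑ i, f i‖ - ‖f i₀‖) ^ 2 ≤ {i | i ≠ i₀ ∧ f i ≠ 0}.ncard * ∑ i, ‖f i‖ ^ 2 := by
  classical
  set T := Finset.univ.filter fun i ↦ i ≠ i₀ ∧ f i ≠ 0
  have hT : {i | i ≠ i₀ ∧ f i ≠ 0} = ↑T := by ext; simp [T]
  have hsplit : ∑ i, f i = f i₀ + ∑ i ∈ T, f i := by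
    rw [← Finset.add_sum_erase _ _ (Finset.mem_univ i₀), ← Finset.sum_filter_ne_zero]
    congr 2
    ext i
    simp [T]
  have htri : ‖∑ i, f i‖ - ‖f i₀‖ ≤ ∑ i ∈ T, ‖f i‖ := by
    rw [sub_le_iff_le_add', hsplit]
    exact (norm_add_le _ _).trans (add_le_add_right (norm_sum_le _ _) _)
  rw [hT, Set.ncard_coe_finset]
  calc (‖∑ i, f i‖ - ‖f i₀‖) ^ 2 ≤ (∑ i ∈ T, ‖f i‖) ^ 2 := pow_le_pow_left₀ (sub_nonneg.mpr h) htri 2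
    _ ≤ T.card * ∑ i ∈ T, ‖f i‖ ^ 2 := sq_sum_le_card_mul_sum_sq
    _ ≤ T.card * ∑ i, ‖f i‖ ^ 2 := by
        gcongr
        exact Finset.subset_univ T

theorem AdjoinRoot.isUnit_mk_iff {R : Type*} [CommRing R] {f g : R[X]} :
    IsUnit (AdjoinRoot.mk f g) ↔ IsCoprime g f := by
  rw [isUnit_iff_exists_inv]
  constructor
  · rintro ⟨b, hb⟩
    obtain ⟨h, rfl⟩ := AdjoinRoot.mk_surjective b
    rw [← map_mul, ← map_one (AdjoinRoot.mk f), AdjoinRoot.mk_eq_mk] at hb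
    obtain ⟨c, hc⟩ := hb
    exact ⟨h, -c, by linear_combination hc⟩
  · rintro ⟨a, b, hab⟩
    refine ⟨AdjoinRoot.mk f a, ?_⟩
    rw [← map_mul, mul_comm, ← map_one (AdjoinRoot.mk f), AdjoinRoot.mk_eq_mk]
    exact ⟨-b, by linear_combination hab⟩

section DirichletChar

variable [CommRing F] {Q : F[X]} {χ : F[X] → ℂ}

theorem isDirichletChar_comp_mk (ψ : MulChar (AdjoinRoot Q) ℂ) :
    IsDirichletChar Q (ψ ∘ AdjoinRoot.mk Q) := by
  refine ⟨fun A B ↦ ?_, fun A B ↦ ?_, fun A ↦ ?_⟩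
  · simp [AdjoinRoot.mk_self]
  · simp
  · rw [Function.comp_apply, MulChar.apply_ne_zero_iff, AdjoinRoot.isUnit_mk_iff]

theorem one_comp_mk_eq_trivialChar :
    ⇑(1 : MulChar (AdjoinRoot Q) ℂ) ∘ AdjoinRoot.mk Q = trivialChar Q := by
  funext A
  simp only [Function.comp_apply, trivialChar]
  split_ifs with h
  · exact MulChar.one_apply (AdjoinRoot.isUnit_mk_iff.mpr h)
  · exact MulChar.map_nonunit _ (mt AdjoinRoot.isUnit_mk_iff.mp h)

theorem mulChar_comp_mk_injective :
    Function.Injective fun ψ : MulChar (AdjoinRoot Q) ℂ ↦ ⇑ψ ∘ AdjoinRoot.mk Q :=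
  fun _ _ h ↦ MulChar.ext' fun a ↦ by
    obtain ⟨A, rfl⟩ := AdjoinRoot.mk_surjective a
    exact congrFun h A

theorem norm_trivialChar_le (Q A : F[X]) : ‖trivialChar Q A‖ ≤ 1 := by
  unfold trivialChar
  split_ifs <;> simp

namespace IsDirichletChar

theorem apply_eq_of_mk_eq (hχ : IsDirichletChar Q χ) {A B : F[X]}
    (h : AdjoinRoot.mk Q A = AdjoinRoot.mk Q B) : χ A = χ B := by
  obtain ⟨C, hC⟩ := AdjoinRoot.mk_eq_mk.mp h
  rw [show A = B + C * Q by linear_combination hC, hχ.1]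

theorem apply_one (hχ : IsDirichletChar Q χ) : χ 1 = 1 :=
  mul_left_cancel₀ ((hχ.2.2 1).mpr isCoprime_one_left) (by rw [← hχ.2.1, mul_one, mul_one])

theorem exists_mulChar_comp_mk (hχ : IsDirichletChar Q χ) :
    ∃ ψ : MulChar (AdjoinRoot Q) ℂ, ψ ∘ AdjoinRoot.mk Q = χ := by
  set rep := Function.surjInv (AdjoinRoot.mk_surjective (g := Q))
  have hrep (A : F[X]) : χ (rep (AdjoinRoot.mk Q A)) = χ A :=
    hχ.apply_eq_of_mk_eq (Function.surjInv_eq _ _)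
  refine ⟨{ toFun := χ ∘ rep, map_one' := ?_, map_mul' := ?_, map_nonunit' := ?_ }, funext hrep⟩
  · rw [Function.comp_apply, ← map_one (AdjoinRoot.mk Q), hrep, hχ.apply_one]
  · intro a b
    obtain ⟨A, rfl⟩ := AdjoinRoot.mk_surjective a
    obtain ⟨B, rfl⟩ := AdjoinRoot.mk_surjective b
    simp only [Function.comp_apply]
    rw [← map_mul, hrep, hrep, hrep, hχ.2.1]
  · intro a ha
    obtain ⟨A, rfl⟩ := AdjoinRoot.mk_surjective a
    rw [Function.comp_apply, hrep]
    by_contra h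
    exact ha (AdjoinRoot.isUnit_mk_iff.mpr ((hχ.2.2 A).mp h))

end IsDirichletChar

theorem ncard_setOf_isDirichletChar_ne_trivialChar (P : (F[X] → ℂ) → Prop) :
    {χ | IsDirichletChar Q χ ∧ χ ≠ trivialChar Q ∧ P χ}.ncard =
      {ψ : MulChar (AdjoinRoot Q) ℂ | ψ ≠ 1 ∧ P (ψ ∘ AdjoinRoot.mk Q)}.ncard := by
  rw [← Set.ncard_image_of_injective _ mulChar_comp_mk_injective]
  congr 1
  ext χ
  constructor
  · rintro ⟨hχ, hne, hP⟩
    obtain ⟨ψ, rfl⟩ := hχ.exists_mulChar_comp_mk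
    exact ⟨ψ, ⟨by rintro rfl; exact hne one_comp_mk_eq_trivialChar, hP⟩, rfl⟩
  · rintro ⟨ψ, ⟨hne, hP⟩, rfl⟩
    refine ⟨isDirichletChar_comp_mk ψ, fun h ↦ hne ?_, hP⟩
    exact mulChar_comp_mk_injective (h.trans one_comp_mk_eq_trivialChar.symm)

end DirichletChar

section MonicPolynomials

variable [Semiring F]

theorem Polynomial.finite_setOf_natDegree_le [Finite F] (n : ℕ) :
    {N : F[X] | N.natDegree ≤ n}.Finite := by
  refine Set.Finite.of_finite_image (f := fun N i ↦ N.coeff (i : Fin (n + 1))) (Set.toFinite _) ?_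
  intro M hM N hN h
  ext k
  rcases le_or_gt k n with hk | hk
  · exact congrFun h ⟨k, by omega⟩
  · rw [coeff_eq_zero_of_natDegree_lt (hM.trans_lt hk),
      coeff_eq_zero_of_natDegree_lt (hN.trans_lt hk)]

theorem Polynomial.Monic.eq_of_natDegree_eq_of_coeff_eq {M N : F[X]} (hM : M.Monic)
    (hN : N.Monic) (hdeg : M.natDegree = N.natDegree)
    (hcoeff : ∀ k < N.natDegree, M.coeff k = N.coeff k) : M = N := by
  ext k
  rcases lt_trichotomy k N.natDegree with hk | rfl | hk
  · exact hcoeff k hk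
  · rw [← hdeg, hM.coeff_natDegree, hdeg, hN.coeff_natDegree]
  · rw [coeff_eq_zero_of_natDegree_lt (hdeg ▸ hk), coeff_eq_zero_of_natDegree_lt hk]

variable (F) in
def monicsDegLE [Finite F] (n : ℕ) : Finset F[X] :=
  ((Polynomial.finite_setOf_natDegree_le n).subset fun _ hN ↦ hN.2 :
    {N : F[X] | N.Monic ∧ N.natDegree ≤ n}.Finite).toFinset

variable [Fintype F] {n : ℕ}

@[simp]
theorem mem_monicsDegLE {N : F[X]} : N ∈ monicsDegLE F n ↔ N.Monic ∧ N.natDegree ≤ n := by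
  simp [monicsDegLE]

theorem card_filter_monicsDegLE_natDegree_eq_le (k : ℕ) :
    #{N ∈ monicsDegLE F n | N.natDegree = k} ≤ Fintype.card F ^ k := by
  have hinj : Set.InjOn (fun N : F[X] ↦ fun i : Fin k ↦ N.coeff i)
      ({N ∈ monicsDegLE F n | N.natDegree = k} : Finset F[X]) := by
    intro M hM N hN h
    simp only [Finset.mem_coe, Finset.mem_filter, mem_monicsDegLE] at hM hN
    refine hM.1.1.eq_of_natDegree_eq_of_coeff_eq hN.1.1 (hM.2.trans hN.2.symm) fun j hj ↦ ?_
    exact congrFun h ⟨j, hN.2 ▸ hj⟩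
  simpa using Finset.card_le_card_of_injOn _ (fun _ _ ↦ Finset.mem_coe.mpr (Finset.mem_univ _)) hinj

theorem sum_monicsDegLE_le {g : ℕ → ℝ} (hg : ∀ k, 0 ≤ g k) :
    ∑ N ∈ monicsDegLE F n, g N.natDegree ≤
      ∑ k ∈ Finset.range (n + 1), (Fintype.card F : ℝ) ^ k * g k := by
  have hmaps (N) (hN : N ∈ monicsDegLE F n) : N.natDegree ∈ Finset.range (n + 1) :=
    Finset.mem_range.mpr (Nat.lt_succ_of_le (mem_monicsDegLE.mp hN).2)
  rw [← Finset.sum_fiberwise_of_maps_to hmaps]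
  refine Finset.sum_le_sum fun k _ ↦ ?_
  rw [Finset.sum_congr rfl fun N hN ↦ by rw [(Finset.mem_filter.mp hN).2], Finset.sum_const,
    nsmul_eq_mul]
  exact mul_le_mul_of_nonneg_right (mod_cast card_filter_monicsDegLE_natDegree_eq_le k) (hg k)

end MonicPolynomials

section LValues

variable [Field F] [Fintype F] {n : ℕ}

theorem AdjoinRoot.finite_of_ne_zero {Q : F[X]} (hQ : Q ≠ 0) : Finite (AdjoinRoot Q) :=
  have := (AdjoinRoot.powerBasis hQ).finite
  Module.finite_of_finite F

theorem Lhalf_eq_sum (χ : F[X] → ℂ) :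
    Lhalf (Fintype.card F) n χ =
      ∑ N ∈ monicsDegLE F n, ((√((Fintype.card F : ℝ) ^ N.natDegree))⁻¹ : ℝ) * χ N :=
  (finsum_mem_eq_finite_toFinset_sum _ _).trans <| Finset.sum_congr rfl fun _ _ ↦ by
    rw [div_eq_inv_mul, Complex.ofReal_inv]

theorem norm_Lhalf_le {χ : F[X] → ℂ} (hχ : ∀ N, ‖χ N‖ ≤ 1) :
    ‖Lhalf (Fintype.card F) n χ‖ ≤ ∑ k ∈ range (n + 1), √((Fintype.card F : ℝ) ^ k) := by
  set q : ℝ := (Fintype.card F : ℝ)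
  calc ‖Lhalf (Fintype.card F) n χ‖ ≤ ∑ N ∈ monicsDegLE F n, (√(q ^ N.natDegree))⁻¹ := by
        rw [Lhalf_eq_sum]
        refine (norm_sum_le _ _).trans (Finset.sum_le_sum fun N _ ↦ ?_)
        rw [norm_mul, Complex.norm_real, Real.norm_of_nonneg (by positivity)]
        exact mul_le_of_le_one_right (by positivity) (hχ N)
    _ ≤ ∑ k ∈ range (n + 1), q ^ k * (√(q ^ k))⁻¹ :=
        sum_monicsDegLE_le (g := fun k ↦ (√(q ^ k))⁻¹) fun _ ↦ by positivity
    _ = ∑ k ∈ range (n + 1), √(q ^ k) :=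
        Finset.sum_congr rfl fun _ _ ↦ by rw [← div_eq_mul_inv, Real.div_sqrt]

variable {Q : F[X]}

theorem injOn_mk_monicsDegLE (hn : n < Q.natDegree) :
    Set.InjOn (AdjoinRoot.mk Q) (monicsDegLE F n) := by
  intro M hM N hN h
  rw [Finset.mem_coe, mem_monicsDegLE] at hM hN
  refine sub_eq_zero.mp (eq_zero_of_dvd_of_natDegree_lt (AdjoinRoot.mk_eq_mk.mp h) ?_)
  exact (natDegree_sub_le M N).trans_lt (max_lt (hM.2.trans_lt hn) (hN.2.trans_lt hn))

theorem isUnit_mk_of_mem_monicsDegLE (hQ : Irreducible Q) (hn : n < Q.natDegree) {N : F[X]}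
    (hN : N ∈ monicsDegLE F n) : IsUnit (AdjoinRoot.mk Q N) := by
  rw [mem_monicsDegLE] at hN
  refine AdjoinRoot.isUnit_mk_iff.mpr (hQ.coprime_iff_not_dvd.mpr fun hdvd ↦ ?_).symm
  exact (natDegree_le_of_dvd hdvd hN.1.ne_zero).not_gt (hN.2.trans_lt hn)

theorem card_mulChar_adjoinRoot (hQ : Irreducible Q) [Fintype (MulChar (AdjoinRoot Q) ℂ)] :
    Fintype.card (MulChar (AdjoinRoot Q) ℂ) = Fintype.card F ^ Q.natDegree - 1 := by
  have := Fact.mk hQ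
  have := AdjoinRoot.finite_of_ne_zero hQ.ne_zero
  have := Fintype.ofFinite (AdjoinRoot Q)
  rw [← Nat.card_eq_fintype_card, MulChar.card_eq_card_units_of_hasEnoughRootsOfUnity,
    Nat.card_units, Nat.card_eq_fintype_card, Module.card_eq_pow_finrank (K := F)]
  exact congrArg (Fintype.card F ^ · - 1) finrank_quotient_span_eq_natDegree

variable [Fintype (MulChar (AdjoinRoot Q) ℂ)]

theorem sum_Lhalf_comp_mk (hn : n < Q.natDegree) :
    ∑ ψ : MulChar (AdjoinRoot Q) ℂ, Lhalf (Fintype.card F) n (ψ ∘ AdjoinRoot.mk Q) =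
      Fintype.card (MulChar (AdjoinRoot Q) ℂ) := by
  classical
  have := AdjoinRoot.finite_of_ne_zero (ne_zero_of_natDegree_gt hn)
  have h1mem : (1 : F[X]) ∈ monicsDegLE F n := mem_monicsDegLE.mpr ⟨monic_one, by simp⟩
  have hfiber : {N ∈ monicsDegLE F n | AdjoinRoot.mk Q N = 1} = {1} := by
    ext N
    simp only [Finset.mem_filter, Finset.mem_singleton]
    constructor
    · rintro ⟨hN, h⟩
      exact injOn_mk_monicsDegLE hn hN h1mem (h.trans (map_one _).symm)
    · rintro rfl
      exact ⟨h1mem, map_one _⟩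
  simp only [Lhalf_eq_sum, Function.comp_apply]
  rw [MulChar.sum_sum_mul_apply, hfiber, Finset.sum_singleton]
  simp

theorem sum_norm_sq_Lhalf_comp_mk_le (hQ : Irreducible Q) (hn : n < Q.natDegree) :
    ∑ ψ : MulChar (AdjoinRoot Q) ℂ, ‖Lhalf (Fintype.card F) n (ψ ∘ AdjoinRoot.mk Q)‖ ^ 2 ≤
      Fintype.card (MulChar (AdjoinRoot Q) ℂ) * (n + 1) := by
  have := AdjoinRoot.finite_of_ne_zero hQ.ne_zero
  set q : ℝ := (Fintype.card F : ℝ)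
  simp only [Lhalf_eq_sum, Function.comp_apply]
  rw [MulChar.sum_norm_sq_sum_mul_apply _ _ (injOn_mk_monicsDegLE hn)
    fun N hN ↦ isUnit_mk_of_mem_monicsDegLE hQ hn hN]
  gcongr
  calc ∑ N ∈ monicsDegLE F n, ‖(((√(q ^ N.natDegree))⁻¹ : ℝ) : ℂ)‖ ^ 2
      = ∑ N ∈ monicsDegLE F n, (q ^ N.natDegree)⁻¹ := Finset.sum_congr rfl fun N _ ↦ by
        rw [Complex.norm_real, Real.norm_of_nonneg (by positivity), inv_pow,
          Real.sq_sqrt (by positivity)]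
    _ ≤ ∑ k ∈ range (n + 1), q ^ k * (q ^ k)⁻¹ :=
        sum_monicsDegLE_le (g := fun k ↦ (q ^ k)⁻¹) fun _ ↦ by positivity
    _ = n + 1 := by simp [mul_inv_cancel₀ (pow_ne_zero _ (show q ≠ 0 by positivity))]

end LValues

section Estimates

theorem sq_two_mul_add_three_le_two_pow {n : ℕ} (hn : 6 ≤ n) : (2 * n + 3) ^ 2 ≤ 2 ^ (n + 2) := by
  induction n, hn using Nat.le_induction with
  | base => norm_num
  | succ n hn ih =>
    calc (2 * (n + 1) + 3) ^ 2 ≤ 2 * (2 * n + 3) ^ 2 := by nlinarith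
      _ ≤ 2 ^ (n + 1 + 2) := by rw [pow_succ 2 (n + 2)]; omega

variable {q : ℝ}

theorem sum_sqrt_pow_lt (hq : 2 ≤ q) {n : ℕ} (hn : 1 ≤ n) :
    ∑ k ∈ range (n + 1), √(q ^ k) < q ^ (n + 1) - 1 := by
  have hgeom : ∑ k ∈ range (n + 1), q ^ k ≤ q ^ (n + 1) - 1 := by
    have hnonneg : 0 ≤ ∑ k ∈ range (n + 1), q ^ k := by positivity
    nlinarith [geom_sum_mul q (n + 1)]
  refine (Finset.sum_lt_sum (fun k _ ↦ ?_) ⟨n, Finset.self_mem_range_succ n, ?_⟩).trans_le hgeom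
  · exact Real.sqrt_le_self_iff.mpr (Or.inr (one_le_pow₀ (by linarith)))
  · exact Real.sqrt_lt_self_iff.mpr (one_lt_pow₀ (by linarith) (by omega))

theorem two_mul_sum_sqrt_pow_le (hq : 2 ≤ q) {n : ℕ} (hn : 6 ≤ n) :
    2 * ∑ k ∈ range (n + 1), √(q ^ k) ≤ q ^ (n + 1) - 1 := by
  have hq1 : 1 ≤ q := by linarith
  have hsum : ∑ k ∈ range (n + 1), √(q ^ k) ≤ (n + 1) * √(q ^ n) := by
    simpa using Finset.sum_le_card_nsmul (range (n + 1)) (fun k ↦ √(q ^ k)) (√(q ^ n))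
      fun k hk ↦ Real.sqrt_le_sqrt (pow_le_pow_right₀ hq1 (Nat.lt_succ_iff.mp (mem_range.mp hk)))
  have hlin : 2 * (n : ℝ) + 3 ≤ √(q ^ (n + 2)) := by
    refine Real.le_sqrt_of_sq_le ?_
    calc (2 * (n : ℝ) + 3) ^ 2 ≤ 2 ^ (n + 2) := mod_cast sq_two_mul_add_three_le_two_pow hn
      _ ≤ q ^ (n + 2) := pow_le_pow_left₀ (by norm_num) hq _
  have hprod : √(q ^ (n + 2)) * √(q ^ n) = q ^ (n + 1) := by
    rw [← Real.sqrt_mul (by positivity), ← pow_add, show n + 2 + n = (n + 1) * 2 by ring,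
      pow_mul, Real.sqrt_sq (by positivity)]
  have h1 : 1 ≤ √(q ^ n) := Real.one_le_sqrt.mpr (one_le_pow₀ hq1)
  nlinarith

theorem pow_div_le_of_sq_sub_le_mul (hq : 2 ≤ q) {n t : ℕ} (hn : 1 ≤ n) {b : ℝ}
    (hb : b ≤ ∑ k ∈ range (n + 1), √(q ^ k))
    (h : (q ^ (n + 1) - 1 - b) ^ 2 ≤ t * ((q ^ (n + 1) - 1) * (n + 1))) :
    (q ^ 5)⁻¹ * q ^ n / n ≤ t := by
  set U := q ^ (n + 1) - 1
  have hqU : q ^ n ≤ U := by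
    have := one_le_pow₀ (show 1 ≤ q by linarith) (n := n)
    simp only [U, pow_succ]
    nlinarith
  have hn1 : (1 : ℝ) ≤ n := mod_cast hn
  have ht0 : (0 : ℝ) ≤ t := t.cast_nonneg
  rcases le_or_gt n 5 with hsmall | hbig
  · have ht : (1 : ℝ) ≤ t := by
      have hbU : 0 < U - b := sub_pos.mpr (hb.trans_lt (sum_sqrt_pow_lt hq hn))
      have htpos : (0 : ℝ) < t := by
        by_contra! h0
        rw [le_antisymm h0 ht0, zero_mul] at h
        exact h.not_gt (pow_pos hbU 2)
      exact Nat.one_le_cast.mpr (Nat.cast_pos.mp htpos)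
    calc (q ^ 5)⁻¹ * q ^ n / n ≤ (q ^ 5)⁻¹ * q ^ n := div_le_self (by positivity) hn1
      _ ≤ 1 := inv_mul_le_one_of_le₀ (pow_le_pow_right₀ (by linarith) hsmall) (by positivity)
      _ ≤ t := ht
  · have hhalf : U / 2 ≤ U - b := by linarith [two_mul_sum_sqrt_pow_le hq hbig]
    have hU4 : U ≤ 4 * t * (n + 1) := by
      have hUpos : 0 < U := (pow_pos (by linarith) n).trans_le hqU
      have := (pow_le_pow_left₀ (by positivity) hhalf 2).trans h
      nlinarith
    have hq5 : 32 ≤ q ^ 5 := by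
      calc (32 : ℝ) = 2 ^ 5 := by norm_num
        _ ≤ q ^ 5 := pow_le_pow_left₀ (by norm_num) hq 5
    rw [div_le_iff₀ (by positivity), inv_mul_le_iff₀ (by positivity)]
    calc q ^ n ≤ 4 * t * (n + 1) := hqU.trans hU4
      _ ≤ 32 * (t * n) := by nlinarith [mul_le_mul_of_nonneg_left hn1 ht0]
      _ ≤ q ^ 5 * (t * n) := by gcongr

end Estimates

/-- Non-vanishing: for monic irreducible `Q` with `𝔇 = deg Q - 1`, the number of
nontrivial characters `χ` modulo `Q` with `L(1/2,χ) ≠ 0` is at least `c · q^𝔇 / 𝔇`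
for a constant `c > 0` depending only on `q`. -/
theorem nonvanishing_proportion
    (F : Type*) [Field F] [Fintype F] (q : ℕ) (hq : Fintype.card F = q) :
    ∃ c : ℝ, 0 < c ∧ ∀ Q : Polynomial F, Q.Monic → Irreducible Q →
      c * (q : ℝ) ^ (Q.natDegree - 1) / ((Q.natDegree : ℝ) - 1) ≤
        ({χ : Polynomial F → ℂ | IsDirichletChar Q χ ∧ χ ≠ trivialChar Q ∧
            Lhalf q (Q.natDegree - 1) χ ≠ 0}.ncard : ℝ) := by
  subst hq
  have hq2 : (2 : ℝ) ≤ Fintype.card F := mod_cast Fintype.one_lt_card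
  refine ⟨((Fintype.card F : ℝ) ^ 5)⁻¹, by positivity, fun Q _ hQ ↦ ?_⟩
  obtain ⟨n, hdeg⟩ := Nat.exists_eq_add_one.mpr hQ.natDegree_pos
  rw [ncard_setOf_isDirichletChar_ne_trivialChar, hdeg, Nat.add_sub_cancel, Nat.cast_add_one,
    add_sub_cancel_right]
  rcases Nat.eq_zero_or_pos n with rfl | hn
  · simp -- `deg Q = 1`: the denominator `𝔇` is `0`, and `x / 0 = 0`
  have hlt : n < Q.natDegree := by omega
  have := AdjoinRoot.finite_of_ne_zero hQ.ne_zero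
  have := Fintype.ofFinite (MulChar (AdjoinRoot Q) ℂ)
  set L : MulChar (AdjoinRoot Q) ℂ → ℂ := fun ψ ↦ Lhalf (Fintype.card F) n (ψ ∘ AdjoinRoot.mk Q)
  have hU : (Fintype.card (MulChar (AdjoinRoot Q) ℂ) : ℝ) = (Fintype.card F : ℝ) ^ (n + 1) - 1 := by
    rw [card_mulChar_adjoinRoot hQ, hdeg, Nat.cast_sub (Nat.one_le_pow _ _ Fintype.card_pos),
      Nat.cast_pow, Nat.cast_one]
  have hsum : ‖∑ ψ, L ψ‖ = (Fintype.card F : ℝ) ^ (n + 1) - 1 := by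
    rw [sum_Lhalf_comp_mk hlt, Complex.norm_natCast, hU]
  have hL1 : ‖L 1‖ ≤ ∑ k ∈ range (n + 1), √((Fintype.card F : ℝ) ^ k) := by
    simp only [L, one_comp_mk_eq_trivialChar]
    exact norm_Lhalf_le (norm_trivialChar_le Q)
  have hCS := norm_sum_sub_norm_sq_le_ncard_mul L 1 (hsum ▸ hL1.trans (sum_sqrt_pow_lt hq2 hn).le)
  rw [hsum] at hCS
  refine pow_div_le_of_sq_sub_le_mul hq2 hn hL1 (hCS.trans ?_)
  rw [← hU]
  gcongr
  exact sum_norm_sq_Lhalf_comp_mk_le hQ hlt
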